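/- In the Braess network with quartic cost c(x) = 0.5x − 0.5x² − x³ + 2x⁴ and no incentives, there exists a ∈ (0, 1/2) such that the symmetric flow (f_{p1}, f_{p2}, f_{p3}) = (a, 1 − 2a, a) is a Wardrop equilibrium in which every path has cost exactly 2, so the equilibrium social cost equals 2. -/

import Mathlib

/-!
Along the symmetric flow `(a, 1 - 2a, a)` both quartic edges carry `x = 1 - a`, so the outer
paths cost `1 + (c x + x)` and the middle path costs `2 (c x + x)`. All three costs equal `2`
exactly when `c x + x = 1`, and since `c x + x` is `5/8` at `x = 1/2` and `2` at `x = 1`, the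
intermediate value theorem yields such an `x ∈ (1/2, 1)`, i.e. `a ∈ (0, 1/2)`.
-/

/-- Quartic latency `c(x) = 0.5x - 0.5x² - x³ + 2x⁴` on edges `e1`, `e4` of the Braess network. -/
noncomputable def c (x : ℝ) : ℝ := 0.5*x - 0.5*x^2 - x^3 + 2*x^4

/-- Path costs in the Braess network (paths `p1, p2, p3` indexed by `Fin 3`), with
incentives `uv2` at node `v` and `uw2` at node `w` applied to path `p2` (all other
incentives zero).  Edge flows: `f_{e1} = f_v = f 0 + f 1`, `f_{e4} = f_w = f 1 + f 2`;
edges `e2`, `e3` have constant cost `1`, edge `e5` has cost `0`; base node costs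
`c_v(x) = c_w(x) = x`. -/
noncomputable def cost (uv2 uw2 : ℝ) (f : Fin 3 → ℝ) : Fin 3 → ℝ :=
  ![ c (f 0 + f 1) + 1 + (f 0 + f 1),
     c (f 0 + f 1) + 0 + c (f 1 + f 2) + ((f 0 + f 1) + uv2) + ((f 1 + f 2) + uw2),
     1 + c (f 1 + f 2) + (f 1 + f 2) ]

theorem continuous_c : Continuous c := by
  unfold c
  fun_prop

theorem exists_mem_Ioo_c_add_self_eq_one : ∃ x ∈ Set.Ioo (1/2 : ℝ) 1, c x + x = 1 :=
  intermediate_value_Ioo (by norm_num) (continuous_c.add continuous_id).continuousOn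
    (by norm_num [c])

theorem cost_symmetric_flow (a : ℝ) :
    cost 0 0 ![a, 1 - 2*a, a] =
      ![1 + (c (1 - a) + (1 - a)), 2 * (c (1 - a) + (1 - a)), 1 + (c (1 - a) + (1 - a))] := by
  have hflow : a + (1 - 2*a) = 1 - a ∧ 1 - 2*a + a = 1 - a := ⟨by ring, by ring⟩
  ext i
  fin_cases i <;>
    simp only [cost, Fin.isValue, Fin.zero_eta, Fin.mk_one, Fin.reduceFinMk, Matrix.cons_val,
      Matrix.cons_val_zero, Matrix.cons_val_one, hflow, add_zero] <;>
    ring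

theorem cost_symmetric_flow_eq_two {a : ℝ} (h : c (1 - a) + (1 - a) = 1) (i : Fin 3) :
    cost 0 0 ![a, 1 - 2*a, a] i = 2 := by
  rw [cost_symmetric_flow, h]
  fin_cases i <;> norm_num

/-- In the quartic Braess network with no incentives, there exists
`a ∈ (0, 1/2)` such that the symmetric flow `(a, 1−2a, a)` is a Wardrop equilibrium in
which every path has cost exactly `2`, so the equilibrium social cost equals `2`. -/
theorem braess_quartic_no_incentive_equilibrium :
    ∃ a : ℝ, 0 < a ∧ a < 1/2 ∧
      (∀ i j : Fin 3, 0 < (![a, 1 - 2*a, a] : Fin 3 → ℝ) i →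
        cost 0 0 ![a, 1 - 2*a, a] i ≤ cost 0 0 ![a, 1 - 2*a, a] j) ∧
      (∀ i : Fin 3, cost 0 0 ![a, 1 - 2*a, a] i = 2) ∧
      (∑ i, (![a, 1 - 2*a, a] : Fin 3 → ℝ) i * cost 0 0 ![a, 1 - 2*a, a] i) = 2 := by
  obtain ⟨x, ⟨hx_gt, hx_lt⟩, hx⟩ := exists_mem_Ioo_c_add_self_eq_one
  have hcost := cost_symmetric_flow_eq_two (a := 1 - x) (by rwa [sub_sub_cancel])
  refine ⟨1 - x, by linarith, by linarith, fun i j _ ↦ by rw [hcost i, hcost j], hcost, ?_⟩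
  simp only [hcost, Fin.sum_univ_three, Matrix.cons_val_zero, Matrix.cons_val_one,
    Matrix.cons_val_two, Matrix.head_cons, Matrix.tail_cons]
  ring
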